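/- The monomials τ^E ξ^R, where E = (e₀, e₁, …) and R = (r₁, r₂, …) range over all finitely supported integer sequences with every e_s ∈ {0, 1} and every r_s ≥ 0, form a basis of 𝒜 as a k-module. (Paper's Lemma 'left H-basis of 𝒜_{∗,∗}', in its substantive case ℓ = 2; for odd ℓ the statement is the standard exterior–polynomial basis.) -/

import Mathlib

open MvPolynomial TensorProduct

noncomputable section

/-- Variables of the dual motivic Steenrod algebra: `.inl i` is `τᵢ`, `.inr i` is `ξ_{i+1}`. -/
abbrev MotVar : Type := ℕ ⊕ ℕ

variable (k : Type) [CommRing k]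

/-- `τᵢ` as a polynomial generator. -/
def tP (i : ℕ) : MvPolynomial MotVar k := X (Sum.inl i)

/-- `ξᵢ` as a polynomial generator, with the convention `ξ₀ = 1`. -/
def xP : ℕ → MvPolynomial MotVar k
  | 0 => 1
  | i + 1 => X (Sum.inr i)

variable (τ ρ : k)

/-- The ideal of defining relations `τᵢ² = τ·ξ_{i+1} + ρ·τ_{i+1} + ρ·τ₀·ξ_{i+1}`. -/
def relIdeal : Ideal (MvPolynomial MotVar k) :=
  Ideal.span (Set.range fun i : ℕ =>
    tP k i ^ 2 - (C τ * xP k (i + 1) + C ρ * tP k (i + 1) + C ρ * tP k 0 * xP k (i + 1)))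

/-- The mod 2 dual motivic Steenrod algebra over `k` (with `H_{*,*}` replaced by `k`). -/
abbrev DSA : Type := MvPolynomial MotVar k ⧸ relIdeal k τ ρ

/-- The canonical projection onto the dual Steenrod algebra. -/
def mkDSA : MvPolynomial MotVar k →+* DSA k τ ρ := Ideal.Quotient.mk _

/-- The monomial `τ^E ξ^R`, where `R i` records the exponent `r_{i+1}` of `ξ_{i+1}`. -/
def monP (E R : ℕ →₀ ℕ) : MvPolynomial MotVar k :=
  (E.prod fun i e => tP k i ^ e) * (R.prod fun i r => xP k (i + 1) ^ r)

/-!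
Read each relation as the rewriting rule `τᵢ² ↦ τ ξ_{i+1} + ρ τ_{i+1} + ρ τ₀ ξ_{i+1}`. It lowers
the total `τ`-degree of a monomial, and the monomials it cannot rewrite are exactly the `τ^E ξ^R`
with `E ∈ {0,1}`; so rewriting terminates and these monomials span `𝒜`. For independence, define
the normal form of a monomial by rewriting some square `τᵢ²` and recursing. Rewriting two
different squares commutes, since the rule only multiplies by monomials, so by induction on the
`τ`-degree the normal form does not depend on the square chosen (the diamond lemma). Hence the
normal form is `k`-linear and kills the relation ideal, and it inverts the map from the free
`k`-module on the irreducible monomials to `𝒜`.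
-/

namespace MotivicSteenrod

variable {k}

abbrev BasisIndex : Type := {p : (ℕ →₀ ℕ) × (ℕ →₀ ℕ) // ∀ s, p.1 s ≤ 1}

def tauExp (i n : ℕ) : MotVar →₀ ℕ := Finsupp.single (Sum.inl i) n

def xiExp (i : ℕ) : MotVar →₀ ℕ := Finsupp.single (Sum.inr i) 1

def tauDeg : (MotVar →₀ ℕ) →+ ℕ := Finsupp.weight (Sum.elim 1 0)

@[simp]
lemma tauDeg_tauExp (i n : ℕ) : tauDeg (tauExp i n) = n := by
  simp [tauDeg, tauExp, Finsupp.weight_single]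

@[simp]
lemma tauDeg_xiExp (i : ℕ) : tauDeg (xiExp i) = 0 := by
  simp [tauDeg, xiExp, Finsupp.weight_single]

lemma exists_eq_tauExp_add {d : MotVar →₀ ℕ} {j : ℕ} (h : 2 ≤ d (Sum.inl j)) :
    ∃ m, d = tauExp j 2 + m :=
  ⟨d - tauExp j 2, (add_tsub_cancel_of_le (Finsupp.single_le_iff.mpr h)).symm⟩

lemma tauDeg_sub_tauExp_add_two {d : MotVar →₀ ℕ} {j : ℕ} (h : 2 ≤ d (Sum.inl j)) :
    tauDeg (d - tauExp j 2) + 2 = tauDeg d := by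
  obtain ⟨m, rfl⟩ := exists_eq_tauExp_add h
  simp [add_comm]

lemma exists_eq_sumElim {d : MotVar →₀ ℕ} (h : ¬∃ j, 2 ≤ d (Sum.inl j)) :
    ∃ p : BasisIndex, d = Finsupp.sumElim p.1.1 p.1.2 := by
  push Not at h
  exact ⟨⟨Finsupp.sumFinsuppEquivProdFinsupp d, fun s => by
    simpa [Finsupp.fst_sumFinsuppEquivProdFinsupp] using Nat.le_of_lt_succ (h s)⟩,
    (Finsupp.sumFinsuppEquivProdFinsupp.symm_apply_apply d).symm⟩

section Rewriting

variable {M M' : Type*} [AddCommMonoid M] [Module k M] [AddCommMonoid M'] [Module k M']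

/-- `f`, extended linearly, applied to the rewrite `(τ ξ_{i+1} + ρ τ_{i+1} + ρ τ₀ ξ_{i+1}) x^m`
of `τᵢ² x^m`. -/
def reduceSq (f : (MotVar →₀ ℕ) → M) (i : ℕ) (m : MotVar →₀ ℕ) : M :=
  τ • f (m + xiExp i) + ρ • f (m + tauExp (i + 1) 1) + ρ • f (m + (tauExp 0 1 + xiExp i))

lemma reduceSq_add_left (f : (MotVar →₀ ℕ) → M) (i : ℕ) (a m : MotVar →₀ ℕ) :
    reduceSq τ ρ f i (a + m) = reduceSq τ ρ (fun d => f (a + d)) i m := by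
  simp only [reduceSq, add_assoc]

lemma reduceSq_congr {f g : (MotVar →₀ ℕ) → M} (i : ℕ) {m : MotVar →₀ ℕ}
    (h : ∀ d, tauDeg d ≤ tauDeg m + 1 → f d = g d) :
    reduceSq τ ρ f i m = reduceSq τ ρ g i m := by
  simp only [reduceSq]
  rw [h, h, h] <;> simp

lemma reduceSq_comm (f : (MotVar →₀ ℕ) → M) (i j : ℕ) (m : MotVar →₀ ℕ) :
    reduceSq τ ρ (reduceSq τ ρ f j) i m = reduceSq τ ρ (reduceSq τ ρ f i) j m := by
  simp only [reduceSq]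
  generalize tauExp 0 1 + xiExp i = c
  generalize tauExp 0 1 + xiExp j = c'
  generalize xiExp i = a, xiExp j = a', tauExp (i + 1) 1 = b, tauExp (j + 1) 1 = b'
  simp only [add_assoc m, add_comm a', add_comm b', add_comm c']
  module

lemma map_reduceSq (φ : M →ₗ[k] M') (f : (MotVar →₀ ℕ) → M) (i : ℕ) (m : MotVar →₀ ℕ) :
    φ (reduceSq τ ρ f i m) = reduceSq τ ρ (φ ∘ f) i m := by
  simp [reduceSq]

end Rewriting

open Classical in
def normalMon (d : MotVar →₀ ℕ) : BasisIndex →₀ k :=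
  if h : ∃ j, 2 ≤ d (Sum.inl j) then
    τ • normalMon (d - tauExp h.choose 2 + xiExp h.choose)
      + ρ • normalMon (d - tauExp h.choose 2 + tauExp (h.choose + 1) 1)
      + ρ • normalMon (d - tauExp h.choose 2 + (tauExp 0 1 + xiExp h.choose))
  else Finsupp.single ⟨Finsupp.sumFinsuppEquivProdFinsupp d, fun s => by
    simpa [Finsupp.fst_sumFinsuppEquivProdFinsupp] using
      Nat.le_of_lt_succ (not_le.mp fun hs => h ⟨s, hs⟩)⟩ 1
termination_by tauDeg d
decreasing_by
  all_goals
    have := tauDeg_sub_tauExp_add_two h.choose_spec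
    simp only [map_add, tauDeg_tauExp, tauDeg_xiExp]
    omega

lemma exists_normalMon_eq_reduceSq {d : MotVar →₀ ℕ} (h : ∃ j, 2 ≤ d (Sum.inl j)) :
    ∃ j, 2 ≤ d (Sum.inl j) ∧
      normalMon τ ρ d = reduceSq τ ρ (normalMon τ ρ) j (d - tauExp j 2) := by
  refine ⟨h.choose, h.choose_spec, ?_⟩
  rw [normalMon, dif_pos h]
  rfl

lemma normalMon_sumElim (p : BasisIndex) :
    normalMon τ ρ (Finsupp.sumElim p.1.1 p.1.2) = Finsupp.single p 1 := by
  have h : ¬∃ j, 2 ≤ Finsupp.sumElim p.1.1 p.1.2 (Sum.inl j) := fun ⟨j, hj⟩ => by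
    have := p.2 j
    simp only [Finsupp.sumElim_inl] at hj
    omega
  rw [normalMon, dif_neg h]
  congr
  exact Finsupp.sumFinsuppEquivProdFinsupp.apply_symm_apply p.1

/-- Confluence: rewriting any square `τᵢ²` first leads to the same normal form. -/
theorem normalMon_tauExp_add (i : ℕ) (m : MotVar →₀ ℕ) :
    normalMon τ ρ (tauExp i 2 + m) = reduceSq τ ρ (normalMon τ ρ) i m := by
  induction hn : tauDeg m using Nat.strong_induction_on generalizing i m with
  | _ n ih =>
  obtain ⟨j, hj, hred⟩ :=
    exists_normalMon_eq_reduceSq τ ρ (d := tauExp i 2 + m) ⟨i, by simp [tauExp]⟩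
  rw [hred]
  by_cases hji : j = i
  · rw [hji, add_tsub_cancel_left]
  obtain ⟨m₀, rfl⟩ := exists_eq_tauExp_add (j := j) (d := m)
    (by simpa [tauExp, Finsupp.single_apply, Ne.symm hji] using hj)
  have ih' (l : ℕ) (d : MotVar →₀ ℕ) (hd : tauDeg d ≤ tauDeg m₀ + 1) :
      normalMon τ ρ (tauExp l 2 + d) = reduceSq τ ρ (normalMon τ ρ) l d :=
    ih _ (by simp at hn; omega) l d rfl
  calc reduceSq τ ρ (normalMon τ ρ) j (tauExp i 2 + (tauExp j 2 + m₀) - tauExp j 2)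
      = reduceSq τ ρ (fun d => normalMon τ ρ (tauExp i 2 + d)) j m₀ := by
        rw [add_left_comm, add_tsub_cancel_left, reduceSq_add_left]
    _ = reduceSq τ ρ (reduceSq τ ρ (normalMon τ ρ) i) j m₀ :=
        reduceSq_congr τ ρ j fun d hd => ih' i d hd
    _ = reduceSq τ ρ (reduceSq τ ρ (normalMon τ ρ) j) i m₀ := reduceSq_comm τ ρ _ j i m₀
    _ = reduceSq τ ρ (fun d => normalMon τ ρ (tauExp j 2 + d)) i m₀ :=
        (reduceSq_congr τ ρ i fun d hd => ih' j d hd).symm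
    _ = reduceSq τ ρ (normalMon τ ρ) i (tauExp j 2 + m₀) :=
        (reduceSq_add_left τ ρ _ i _ _).symm

def rel (i : ℕ) : MvPolynomial MotVar k :=
  tP k i ^ 2 - (C τ * xP k (i + 1) + C ρ * tP k (i + 1) + C ρ * tP k 0 * xP k (i + 1))

lemma monomial_mul_rel (m : MotVar →₀ ℕ) (i : ℕ) :
    monomial m 1 * rel τ ρ i =
      monomial (tauExp i 2 + m) 1 - reduceSq τ ρ (fun d => monomial d (1 : k)) i m := by
  simp only [rel, reduceSq, tP, xP, tauExp, xiExp, X, monomial_pow, mul_sub, mul_add,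
    monomial_mul, C_mul_monomial, smul_monomial, Finsupp.smul_single, smul_eq_mul, mul_one,
    one_pow, one_mul, add_comm m, add_assoc]

lemma mkDSA_monomial_tauExp_add (i : ℕ) (m : MotVar →₀ ℕ) :
    mkDSA k τ ρ (monomial (tauExp i 2 + m) 1) =
      mkDSA k τ ρ (reduceSq τ ρ (fun d => monomial d (1 : k)) i m) :=
  Ideal.Quotient.eq.mpr <| by
    rw [← monomial_mul_rel]
    exact Ideal.mul_mem_left _ _ (Ideal.subset_span ⟨i, rfl⟩)

def normalForm : MvPolynomial MotVar k →ₗ[k] BasisIndex →₀ k :=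
  (basisMonomials MotVar k).constr k (normalMon τ ρ)

lemma normalForm_monomial (d : MotVar →₀ ℕ) :
    normalForm τ ρ (monomial d 1) = normalMon τ ρ d :=
  (basisMonomials MotVar k).constr_basis k (normalMon τ ρ) d

lemma normalForm_mul_rel (g : MvPolynomial MotVar k) (i : ℕ) :
    normalForm τ ρ (g * rel τ ρ i) = 0 := by
  induction g using MvPolynomial.induction_on' with
  | monomial d c =>
    rw [show monomial d c = c • monomial d (1 : k) by rw [smul_monomial, smul_eq_mul, mul_one],
      smul_mul_assoc, map_smul, monomial_mul_rel, map_sub, map_reduceSq]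
    simp only [Function.comp_def, normalForm_monomial, normalMon_tauExp_add, sub_self, smul_zero]
  | add p q hp hq => rw [add_mul, map_add, hp, hq, add_zero]

lemma normalForm_eq_zero_of_mem {x : MvPolynomial MotVar k} (hx : x ∈ relIdeal k τ ρ) :
    normalForm τ ρ x = 0 := by
  obtain ⟨c, rfl⟩ := Finsupp.mem_ideal_span_range_iff_exists_finsupp.mp hx
  rw [Finsupp.sum, map_sum]
  exact Finset.sum_eq_zero fun i _ => normalForm_mul_rel τ ρ (c i) i

def normalFormQ : DSA k τ ρ →ₗ[k] BasisIndex →₀ k :=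
  ((relIdeal k τ ρ).restrictScalars k).liftQ (normalForm τ ρ)
      (fun _ => normalForm_eq_zero_of_mem τ ρ) ∘ₗ
    (Submodule.Quotient.restrictScalarsEquiv k (relIdeal k τ ρ)).symm.toLinearMap

lemma normalFormQ_mkDSA (f : MvPolynomial MotVar k) :
    normalFormQ τ ρ (mkDSA k τ ρ f) = normalForm τ ρ f :=
  rfl

lemma monP_eq_monomial (E R : ℕ →₀ ℕ) : monP k E R = monomial (Finsupp.sumElim E R) 1 := by
  rw [monomial_eq, C_1, one_mul, Finsupp.prod_sumElim]
  rfl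

def mkDSAₗ : MvPolynomial MotVar k →ₗ[k] DSA k τ ρ := (Ideal.Quotient.mkₐ k _).toLinearMap

def basisVec (p : BasisIndex) : DSA k τ ρ := mkDSA k τ ρ (monP k p.1.1 p.1.2)

lemma linearCombination_normalMon (d : MotVar →₀ ℕ) :
    Finsupp.linearCombination k (basisVec τ ρ) (normalMon τ ρ d) =
      mkDSA k τ ρ (monomial d 1) := by
  induction hn : tauDeg d using Nat.strong_induction_on generalizing d with
  | _ n ih =>
  by_cases h : ∃ j, 2 ≤ d (Sum.inl j)
  · obtain ⟨j, hj, hred⟩ := exists_normalMon_eq_reduceSq τ ρ h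
    obtain ⟨m, rfl⟩ := exists_eq_tauExp_add hj
    have hm : tauDeg m + 2 = n := by simpa [add_comm] using hn
    calc Finsupp.linearCombination k (basisVec τ ρ) (normalMon τ ρ (tauExp j 2 + m))
        = reduceSq τ ρ (Finsupp.linearCombination k (basisVec τ ρ) ∘ normalMon τ ρ) j m := by
          rw [hred, add_tsub_cancel_left, map_reduceSq]
      _ = reduceSq τ ρ (mkDSAₗ τ ρ ∘ fun d => monomial d 1) j m :=
          reduceSq_congr τ ρ j fun d hd => ih _ (by omega) d rfl
      _ = mkDSA k τ ρ (monomial (tauExp j 2 + m) 1) := by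
          rw [← map_reduceSq, mkDSA_monomial_tauExp_add]
          rfl
  · obtain ⟨p, rfl⟩ := exists_eq_sumElim h
    rw [normalMon_sumElim, Finsupp.linearCombination_single, one_smul, basisVec, monP_eq_monomial]

lemma linearCombination_normalForm (f : MvPolynomial MotVar k) :
    Finsupp.linearCombination k (basisVec τ ρ) (normalForm τ ρ f) = mkDSA k τ ρ f := by
  have : Finsupp.linearCombination k (basisVec τ ρ) ∘ₗ normalForm τ ρ = mkDSAₗ τ ρ :=
    (basisMonomials MotVar k).ext fun d => by
      rw [coe_basisMonomials, LinearMap.comp_apply, normalForm_monomial,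
        linearCombination_normalMon]
      rfl
  exact LinearMap.congr_fun this f

def normalFormEquiv : DSA k τ ρ ≃ₗ[k] BasisIndex →₀ k :=
  LinearEquiv.ofLinearMap (normalFormQ τ ρ) (Finsupp.linearCombination k (basisVec τ ρ))
    (Finsupp.lhom_ext fun p c => by
      simp only [LinearMap.coe_comp, Function.comp_apply, Finsupp.linearCombination_single,
        basisVec, monP_eq_monomial, map_smul, normalFormQ_mkDSA, normalForm_monomial,
        normalMon_sumElim, Finsupp.smul_single, smul_eq_mul, mul_one, LinearMap.id_coe, id_eq])
    (LinearMap.ext fun x => by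
      obtain ⟨f, rfl⟩ := Ideal.Quotient.mk_surjective x
      exact linearCombination_normalForm τ ρ f)

end MotivicSteenrod

theorem statement0 (k : Type) [CommRing k] (τ ρ : k) :
    ∃ b : Module.Basis {p : (ℕ →₀ ℕ) × (ℕ →₀ ℕ) // ∀ s, p.1 s ≤ 1} k (DSA k τ ρ),
      ∀ p, b p = mkDSA k τ ρ (monP k p.1.1 p.1.2) :=
  ⟨.ofRepr (MotivicSteenrod.normalFormEquiv τ ρ), fun p => by
    simp only [MotivicSteenrod.normalFormEquiv, Module.Basis.coe_ofRepr,
      LinearEquiv.symm_ofLinearMap, LinearEquiv.coe_ofLinearMap,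
      Finsupp.linearCombination_single, MotivicSteenrod.basisVec, one_smul]⟩

end
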